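/- arXiv:2503.17177 — 8 statements merged into one kernel-verified Lean document; each statement's English description precedes it below -/
import Mathlib

section
/- Let ρ(x) = |x|^p + a with p > 0 and a > 0. Given any finite collection of closed intervals [αᵢ, βᵢ] ⊂ ℝ, 1 ≤ i ≤ N, with αᵢ < βᵢ, which are pairwise disjoint, there exists a single interval [α, β] with α ≤ 0 < β such that ∫_α^β ρ(x) dx = Σᵢ ∫_{αᵢ}^{βᵢ} ρ(x) dx and ρ(α) + ρ(β) ≤ Σᵢ (ρ(αᵢ) + ρ(βᵢ)). -/
/-!
Split the union `U` of the intervals at `0`. The part of `U` left of `0` lies in `[min L 0, 0]`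
and the part right of `0` in `[0, max R 0]`, where `L` is the leftmost and `R` the rightmost
endpoint. Since `ρ` is even and increasing in `|x|`, each part can be replaced by an interval
`[-u, 0]` resp. `[0, w]` of the same mass with `|u| ≤ |L|` and `|w| ≤ |R|`, so that
`ρ(-u) + ρ(w) ≤ ρ(L) + ρ(R)`, which is at most the total perimeter. If no mass lies right of
`0`, the whole mass is put on `[0, w]` instead, to keep the right endpoint positive.
-/

open MeasureTheory intervalIntegral Set Function

lemma add_le_sum_add {ι : Type*} [Fintype ι] {u v : ι → ℝ} (hu : ∀ i, 0 ≤ u i)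
    (hv : ∀ i, 0 ≤ v i) (i j : ι) : u i + v j ≤ ∑ k, (u k + v k) := by
  rw [Finset.sum_add_distrib]
  exact add_le_add (Finset.single_le_sum (fun k _ => hu k) (Finset.mem_univ i))
    (Finset.single_le_sum (fun k _ => hv k) (Finset.mem_univ j))

section Density

variable {f : ℝ → ℝ}

lemma exists_mem_Icc_integral_eq {R t : ℝ} (hf : IntegrableOn f (Icc 0 R)) (hR : 0 ≤ R)
    (ht : 0 ≤ t) (htR : t ≤ ∫ x in 0..R, f x) : ∃ x ∈ Icc 0 R, ∫ y in 0..x, f y = t := by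
  have hcont := continuousOn_primitive_interval (a := 0) (b := R) (by rwa [uIcc_of_le hR])
  rw [uIcc_of_le hR] at hcont
  exact intermediate_value_Icc hR hcont ⟨by simpa using ht, htR⟩

lemma setIntegral_le_integral_of_subset_Ioc {S : Set ℝ} {a b : ℝ}
    (hf : IntegrableOn f (Ioc a b)) (hf0 : ∀ x, 0 ≤ f x) (hab : a ≤ b) (hS : S ⊆ Ioc a b) :
    ∫ x in S, f x ≤ ∫ x in a..b, f x := by
  rw [integral_of_le hab]
  exact setIntegral_mono_set hf (.of_forall hf0) hS.eventuallyLE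

lemma sum_integral_eq_setIntegral_iUnion {ι : Type*} [Fintype ι] (hf : Continuous f)
    {α β : ι → ℝ} (hle : ∀ i, α i ≤ β i)
    (hdisj : Pairwise (Disjoint on (fun i => Ioc (α i) (β i)))) :
    ∑ i, ∫ x in α i..β i, f x = ∫ x in ⋃ i, Ioc (α i) (β i), f x := by
  rw [integral_iUnion_fintype (fun _ => measurableSet_Ioc) hdisj
    (fun _ => hf.integrableOn_Ioc)]
  exact Finset.sum_congr rfl fun i _ => integral_of_le (hle i)

lemma integral_neg_zero_eq_of_even (hf_even : ∀ x, f (-x) = f x) (u : ℝ) :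
    ∫ x in -u..0, f x = ∫ x in 0..u, f x := by
  simpa [hf_even] using (integral_comp_neg (a := 0) (b := u) f).symm

theorem exists_interval_integral_eq_add_of_le (hf : Continuous f)
    (hf_mono : ∀ x y, |x| ≤ |y| → f x ≤ f y) {L R m m' : ℝ}
    (hL : L ≤ 0) (hR : 0 ≤ R) (hm : 0 ≤ m) (hm' : 0 ≤ m') (hpos : 0 < m + m')
    (hmL : m ≤ ∫ x in L..0, f x) (hmR : m' ≤ ∫ x in 0..R, f x) :
    ∃ a b, a ≤ 0 ∧ 0 < b ∧ ∫ x in a..b, f x = m + m' ∧ f a + f b ≤ f L + f R := by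
  have hf_even (x : ℝ) : f (-x) = f x :=
    le_antisymm (hf_mono _ _ (abs_neg x).le) (hf_mono _ _ (abs_neg x).ge)
  have hint (S : ℝ) : IntegrableOn f (Icc 0 S) := hf.integrableOn_Icc
  have hle {x S : ℝ} (hx : x ∈ Icc 0 S) : f x ≤ f S := by
    refine hf_mono _ _ ?_
    rw [abs_of_nonneg hx.1, abs_of_nonneg (hx.1.trans hx.2)]
    exact hx.2
  have hfL : f (-L) = f L := hf_even L
  rw [← neg_neg L, integral_neg_zero_eq_of_even hf_even] at hmL
  rcases hm'.lt_or_eq with hm'_pos | rfl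
  · obtain ⟨u, hu, hFu⟩ := exists_mem_Icc_integral_eq (hint _) (neg_nonneg.mpr hL) hm hmL
    obtain ⟨w, hw, hFw⟩ := exists_mem_Icc_integral_eq (hint R) hR hm' hmR
    have hw_pos : 0 < w := hw.1.lt_of_ne <| by rintro rfl; rw [integral_same] at hFw; linarith
    refine ⟨-u, w, by linarith [hu.1], hw_pos, ?_, ?_⟩
    · rw [← integral_add_adjacent_intervals (hf.intervalIntegrable _ 0)
        (hf.intervalIntegrable 0 _), integral_neg_zero_eq_of_even hf_even, hFu, hFw]
    · linarith [hf_even u, hle hu, hle hw]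
  · rw [add_zero] at hpos ⊢
    obtain ⟨w, hw, hFw⟩ := exists_mem_Icc_integral_eq (hint _) (neg_nonneg.mpr hL) hm hmL
    have hw_pos : 0 < w := hw.1.lt_of_ne <| by rintro rfl; rw [integral_same] at hFw; linarith
    refine ⟨0, w, le_rfl, hw_pos, hFw, ?_⟩
    linarith [hle hw, hle ⟨le_rfl, hR⟩]

theorem exists_interval_integral_eq_sum_and_perimeter_le (hf : Continuous f)
    (hf_mono : ∀ x y, |x| ≤ |y| → f x ≤ f y) (hf_pos : ∀ x, 0 < f x)
    {ι : Type*} [Fintype ι] [Nonempty ι] {α β : ι → ℝ}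
    (hlt : ∀ i, α i < β i) (hdisj : Pairwise (Disjoint on (fun i => Ioc (α i) (β i)))) :
    ∃ a b, a ≤ 0 ∧ 0 < b ∧ ∫ x in a..b, f x = ∑ i, ∫ x in α i..β i, f x ∧
      f a + f b ≤ ∑ i, (f (α i) + f (β i)) := by
  obtain ⟨i₀, hi₀⟩ := Finite.exists_min α
  obtain ⟨j₀, hj₀⟩ := Finite.exists_max β
  set U := ⋃ i, Ioc (α i) (β i)
  have hU : U ⊆ Ioc (α i₀) (β j₀) :=
    iUnion_subset fun i => Ioc_subset_Ioc (hi₀ i) (hj₀ i)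
  have hf0 (x : ℝ) : 0 ≤ f x := (hf_pos x).le
  have hleft : ∫ x in U ∩ Iic 0, f x ≤ ∫ x in min (α i₀) 0..0, f x :=
    setIntegral_le_integral_of_subset_Ioc hf.integrableOn_Ioc hf0 (min_le_right _ _)
      fun x hx => ⟨(min_le_left _ _).trans_lt (hU hx.1).1, hx.2⟩
  have hright : ∫ x in U \ Iic 0, f x ≤ ∫ x in 0..max (β j₀) 0, f x :=
    setIntegral_le_integral_of_subset_Ioc hf.integrableOn_Ioc hf0 (le_max_right _ _)
      fun x hx => ⟨not_le.mp hx.2, (hU hx.1).2.trans (le_max_left _ _)⟩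
  have htotal : 0 < ∑ i, ∫ x in α i..β i, f x :=
    Finset.sum_pos (fun i _ => intervalIntegral_pos_of_pos (hf.intervalIntegrable _ _) hf_pos
      (hlt i)) Finset.univ_nonempty
  rw [sum_integral_eq_setIntegral_iUnion hf (fun i => (hlt i).le) hdisj,
    ← integral_inter_add_sdiff measurableSet_Iic
      (hf.integrableOn_Icc.mono_set (hU.trans Ioc_subset_Icc_self))] at htotal ⊢
  obtain ⟨a, b, ha, hb, hab, hper⟩ := exists_interval_integral_eq_add_of_le hf hf_mono
    (min_le_right _ _) (le_max_right _ _) (integral_nonneg hf0)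
    (integral_nonneg hf0) htotal hleft hright
  refine ⟨a, b, ha, hb, hab, ?_⟩
  have hL : f (min (α i₀) 0) ≤ f (α i₀) :=
    hf_mono _ _ (by rcases le_total (α i₀) 0 with h | h <;> simp [h])
  have hR : f (max (β j₀) 0) ≤ f (β j₀) :=
    hf_mono _ _ (by rcases le_total (β j₀) 0 with h | h <;> simp [h])
  linarith [add_le_sum_add (fun i => hf0 (α i)) (fun i => hf0 (β i)) i₀ j₀]

end Density

/-- For the density `ρ(x) = |x|^p + a` (`p > 0`, `a > 0`), any finite collection of
pairwise disjoint closed intervals can be replaced by a single interval `[α, β]` with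
`α ≤ 0 < β`, of the same total weighted mass and with weighted perimeter at most the
sum of the weighted perimeters of the original intervals. -/
theorem stmt_2 (p a : ℝ) (hp : 0 < p) (ha : 0 < a)
    (ρ : ℝ → ℝ) (hρ : ∀ x, ρ x = |x| ^ p + a)
    (N : ℕ) (hN : 0 < N) (α β : Fin N → ℝ) (hlt : ∀ i, α i < β i)
    (hdisj : ∀ i j, i ≠ j →
      Disjoint (Set.Icc (α i) (β i)) (Set.Icc (α j) (β j))) :
    ∃ α' β' : ℝ, α' ≤ 0 ∧ 0 < β' ∧
      (∫ x in α'..β', ρ x) = ∑ i, ∫ x in (α i)..(β i), ρ x ∧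
      ρ α' + ρ β' ≤ ∑ i, (ρ (α i) + ρ (β i)) := by
  have hρ_cont : Continuous ρ := by
    rw [funext hρ]
    exact (continuous_abs.rpow_const fun _ => Or.inr hp.le).add continuous_const
  have hρ_pos (x : ℝ) : 0 < ρ x := by rw [hρ]; positivity
  have hρ_mono (x y : ℝ) (hxy : |x| ≤ |y|) : ρ x ≤ ρ y := by
    rw [hρ, hρ]
    gcongr
  have : Nonempty (Fin N) := Fin.pos_iff_nonempty.mp hN
  exact exists_interval_integral_eq_sum_and_perimeter_le hρ_cont hρ_mono hρ_pos hlt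
    fun i j hij => (hdisj i j hij).mono Ioc_subset_Icc_self Ioc_subset_Icc_self
end

section
/- Let ρ(x) = |x|^p + a with p > 1 and a > 0, let M₀ > 0, and suppose a ≥ a_crit where a_crit = ((p+1)/(4p))^(p/(p+1))·(p-1)^(-1/(p+1))·M₀^(p/(p+1)). Then there is a unique β̄ > 0 with 2β̄^(p+1)/(p+1) + 2aβ̄ = M₀, and for every pair (α, β) with α ≤ 0 ≤ β and |α|^(p+1)/(p+1) + β^(p+1)/(p+1) + a(|α| + β) = M₀, one has |α|^p + β^p + 2a ≥ 2β̄^p + 2a; that is, the symmetric interval [-β̄, β̄] has least weighted perimeter among all intervals of weighted mass M₀ that contain the origin. -/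
/-!
Write `x = |α|`, `y = β`, let `τ` be the inverse of `t ↦ ∫₀ᵗ ρ` and `h = τ ^ p`. Intervals
`[-x, y]` of mass `M₀` are parametrised by `m = ∫₀ˣ ρ`, and their perimeter is
`2a + h m + h (M₀ - m)`; this is smallest at `m = M₀ / 2` as soon as `h' m ≤ h' (M₀ - m)` for
`m ≤ M₀ / 2`. Now `h' = p / (χ ∘ τ)` with `χ t = t ^ (1 - p) ρ t`, so it is enough that
`χ ∘ τ` decreases from `M₀/2 - δ` to `M₀/2 + δ`. The derivative `ω ∘ τ` of `χ ∘ τ` is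
nonpositive at `M₀ / 2` and concave on `(0, M₀]`, so `ω ∘ τ (M₀/2 - δ) + ω ∘ τ (M₀/2 + δ) ≤ 0`.

Both facts come from the critical density: `a ≥ a_crit` says exactly that `M₀` is at most twice
the mass of `[0, s]`, where `s ^ p = (p - 1) a` is the inflection point of `h`. This puts `τ (M₀/2)`
below `s`, where `ω ≤ 0`, and, through `2p ≤ 3 ^ (1/p) (2p - 1)`, keeps `τ ^ p ≤ 3 (p - 1) a` on
`(0, M₀]`, which is where the second derivative of `ω ∘ τ` is nonpositive.
-/

open Real Set Filter

lemma two_mul_le_add_of_hasDerivAt {f f' : ℝ → ℝ} {c d : ℝ} (hd : 0 ≤ d)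
    (hf : ContinuousOn f (Icc (c - d) (c + d)))
    (hf' : ∀ x ∈ Ioo (c - d) (c + d), HasDerivAt f (f' x) x)
    (h : ∀ δ ∈ Ioo 0 d, f' (c - δ) ≤ f' (c + δ)) :
    2 * f c ≤ f (c - d) + f (c + d) := by
  have hmono : MonotoneOn (fun δ => f (c - δ) + f (c + δ)) (Icc 0 d) := by
    refine monotoneOn_of_hasDerivWithinAt_nonneg (f' := fun δ => -f' (c - δ) + f' (c + δ))
      (convex_Icc 0 d) ?_ (fun δ hδ => ?_) (fun δ hδ => ?_)
    · refine (hf.comp (by fun_prop) fun δ hδ => ?_).add (hf.comp (by fun_prop) fun δ hδ => ?_) <;>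
        constructor <;> linarith [hδ.1, hδ.2]
    · rw [interior_Icc] at hδ
      have hl : c - δ ∈ Ioo (c - d) (c + d) := ⟨by linarith [hδ.2], by linarith [hδ.1]⟩
      have hr : c + δ ∈ Ioo (c - d) (c + d) := ⟨by linarith [hδ.1], by linarith [hδ.2]⟩
      exact (((hf' _ hl).comp_const_sub c δ).add ((hf' _ hr).comp_const_add c δ)).hasDerivWithinAt
    · rw [interior_Icc] at hδ
      linarith [h δ hδ]
  simpa [two_mul] using hmono (left_mem_Icc.2 hd) (right_mem_Icc.2 hd) hd

lemma le_of_concaveOn_of_hasDerivAt {f f' : ℝ → ℝ} {c d : ℝ} (hd : 0 ≤ d)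
    (hf : ∀ x ∈ Icc (c - d) (c + d), HasDerivAt f (f' x) x)
    (hconc : ConcaveOn ℝ (Icc (c - d) (c + d)) f') (hc : f' c ≤ 0) :
    f (c + d) ≤ f (c - d) := by
  have hl : ∀ δ ∈ Icc 0 d, c - δ ∈ Icc (c - d) (c + d) := fun δ hδ =>
    ⟨by linarith [hδ.2], by linarith [hδ.1]⟩
  have hr : ∀ δ ∈ Icc 0 d, c + δ ∈ Icc (c - d) (c + d) := fun δ hδ =>
    ⟨by linarith [hδ.1], by linarith [hδ.2]⟩
  have hanti : AntitoneOn (fun δ => f (c + δ) - f (c - δ)) (Icc 0 d) := by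
    refine antitoneOn_of_hasDerivWithinAt_nonpos (f' := fun δ => f' (c + δ) - -f' (c - δ))
      (convex_Icc 0 d) (fun δ hδ => ?_) (fun δ hδ => ?_) (fun δ hδ => ?_)
    · exact (((hf _ (hr δ hδ)).comp_const_add c δ).sub
        ((hf _ (hl δ hδ)).comp_const_sub c δ)).continuousAt.continuousWithinAt
    · have hδ' := interior_subset hδ
      exact (((hf _ (hr δ hδ')).comp_const_add c δ).sub
        ((hf _ (hl δ hδ')).comp_const_sub c δ)).hasDerivWithinAt
    · have hδ' := interior_subset hδ
      have hmid := hconc.2 (hl δ hδ') (hr δ hδ') (by norm_num : (0 : ℝ) ≤ 1 / 2)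
        (by norm_num : (0 : ℝ) ≤ 1 / 2) (by norm_num)
      rw [smul_eq_mul, smul_eq_mul, smul_eq_mul, smul_eq_mul,
        show 1 / 2 * (c - δ) + 1 / 2 * (c + δ) = c by ring] at hmid
      linarith
  simpa using hanti (left_mem_Icc.2 hd) (right_mem_Icc.2 hd) hd

lemma hasDerivAt_rpow_of_pos {t : ℝ} (ht : 0 < t) (p : ℝ) :
    HasDerivAt (fun t => t ^ p) (p * t ^ p / t) t := by
  simpa [rpow_sub_one ht.ne', mul_div_assoc] using hasDerivAt_rpow_const (p := p) (Or.inl ht.ne')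

namespace PowerDensity

variable {p a : ℝ}

/-- The mass `∫₀ᵗ (|x|^p + a) dx` of `[0, t]` for `t ≥ 0`, continued as an odd function so that it
is a bijection of `ℝ`. -/
noncomputable def mass (p a t : ℝ) : ℝ := |t| ^ p * t / (p + 1) + a * t

lemma mass_of_nonneg (hp : 0 ≤ p) (a : ℝ) {t : ℝ} (ht : 0 ≤ t) :
    mass p a t = t ^ (p + 1) / (p + 1) + a * t := by
  rw [mass, abs_of_nonneg ht, rpow_add_one' ht (by linarith)]

lemma mass_zero (p a : ℝ) : mass p a 0 = 0 := by simp [mass]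

lemma continuous_mass (hp : 0 ≤ p) (a : ℝ) : Continuous (mass p a) := by
  unfold mass
  fun_prop (disch := exact Or.inr hp)

lemma mass_strictMono (hp : 0 ≤ p) (ha : 0 < a) : StrictMono (mass p a) := by
  have hodd : Monotone fun t : ℝ => |t| ^ p * t := by
    refine monotone_of_odd_of_monotoneOn_nonneg (fun t => by simp) fun x hx y hy hxy => ?_
    rw [abs_of_nonneg (mem_Ici.1 hx), abs_of_nonneg (mem_Ici.1 hy)]
    exact mul_le_mul (rpow_le_rpow hx hxy hp) hxy hx (rpow_nonneg hy p)
  exact (hodd.div_const (by linarith)).add_strictMono (strictMono_id.const_mul ha)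

lemma mass_surjective (hp : 0 ≤ p) (ha : 0 < a) : Function.Surjective (mass p a) := by
  have hp1 : 0 < p + 1 := by linarith
  refine (continuous_mass hp a).surjective ?_ ?_
  · refine tendsto_atTop_mono' atTop ?_ (tendsto_id.const_mul_atTop ha)
    filter_upwards [eventually_ge_atTop 0] with t ht
    have : 0 ≤ |t| ^ p * t / (p + 1) := div_nonneg (mul_nonneg (by positivity) ht) hp1.le
    simp only [mass, id]
    linarith
  · refine tendsto_atBot_mono' atBot ?_ (tendsto_id.const_mul_atBot ha)
    filter_upwards [eventually_le_atBot 0] with t ht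
    have : |t| ^ p * t / (p + 1) ≤ 0 :=
      div_nonpos_of_nonpos_of_nonneg (mul_nonpos_of_nonneg_of_nonpos (by positivity) ht) hp1.le
    simp only [mass, id]
    linarith

noncomputable def radius (p a : ℝ) : ℝ → ℝ := Function.invFun (mass p a)

lemma mass_radius (hp : 0 ≤ p) (ha : 0 < a) (m : ℝ) : mass p a (radius p a m) = m :=
  Function.invFun_eq (mass_surjective hp ha m)

lemma radius_mass (hp : 0 ≤ p) (ha : 0 < a) (t : ℝ) : radius p a (mass p a t) = t :=
  Function.leftInverse_invFun (mass_strictMono hp ha).injective t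

lemma radius_strictMono (hp : 0 ≤ p) (ha : 0 < a) : StrictMono (radius p a) := fun m m' h =>
  (mass_strictMono hp ha).lt_iff_lt.1 (by rwa [mass_radius hp ha, mass_radius hp ha])

lemma continuous_radius (hp : 0 ≤ p) (ha : 0 < a) : Continuous (radius p a) :=
  (radius_strictMono hp ha).monotone.continuous_of_surjective fun t => ⟨_, radius_mass hp ha t⟩

lemma radius_pos (hp : 0 ≤ p) (ha : 0 < a) {m : ℝ} (hm : 0 < m) : 0 < radius p a m := by
  have h := radius_strictMono hp ha hm
  rwa [← mass_zero p a, radius_mass hp ha] at h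

lemma hasDerivAt_mass (hp : 0 ≤ p) (a : ℝ) {t : ℝ} (ht : 0 < t) :
    HasDerivAt (mass p a) (t ^ p + a) t := by
  have h := ((hasDerivAt_rpow_of_pos ht (p + 1)).div_const (p + 1)).add
    ((hasDerivAt_id' t).const_mul a)
  rw [rpow_add_one ht.ne', show (p + 1) * (t ^ p * t) / t / (p + 1) + a * 1 = t ^ p + a by
    field_simp] at h
  refine h.congr_of_eventuallyEq ?_
  filter_upwards [eventually_gt_nhds ht] with s hs
  exact mass_of_nonneg hp a hs.le

lemma hasDerivAt_radius (hp : 0 ≤ p) (ha : 0 < a) {m : ℝ} (hm : 0 < m) :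
    HasDerivAt (radius p a) ((radius p a m ^ p + a)⁻¹) m :=
  HasDerivAt.of_local_left_inverse (continuous_radius hp ha).continuousAt
    (hasDerivAt_mass hp a (radius_pos hp ha hm))
    (by have := rpow_nonneg (radius_pos hp ha hm).le p; positivity)
    (Eventually.of_forall (mass_radius hp ha))

lemma hasDerivAt_comp_radius (hp : 0 ≤ p) (ha : 0 < a) {g : ℝ → ℝ} {g' m : ℝ} (hm : 0 < m)
    (hg : HasDerivAt g g' (radius p a m)) :
    HasDerivAt (fun m => g (radius p a m)) (g' / (radius p a m ^ p + a)) m := by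
  rw [div_eq_mul_inv]
  exact hg.comp m (hasDerivAt_radius hp ha hm)

lemma hasDerivAt_comp_radius_of_mul (hp : 0 ≤ p) (ha : 0 < a) {g : ℝ → ℝ} {g' m : ℝ}
    (hm : 0 < m) (hg : HasDerivAt g (g' * (radius p a m ^ p + a)) (radius p a m)) :
    HasDerivAt (fun m => g (radius p a m)) g' m := by
  have hρ : 0 < radius p a m ^ p + a := by
    have := rpow_nonneg (radius_pos hp ha hm).le p; linarith
  simpa [hρ.ne'] using hasDerivAt_comp_radius hp ha hm hg

/-- With `τ = radius p a`, the derivatives in `m` are `(τ m ^ p)' = p / chi p a (τ m)`,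
`(chi p a (τ m))' = omega p a (τ m)` and `(omega p a (τ m))' = omegaDeriv p a (τ m)`. -/
noncomputable def chi (p a t : ℝ) : ℝ := t * (t ^ p + a) / t ^ p

noncomputable def omega (p a t : ℝ) : ℝ := (t ^ p - (p - 1) * a) / (t ^ p * (t ^ p + a))

noncomputable def omegaDeriv (p a t : ℝ) : ℝ :=
  p * (2 * (p - 1) * a * t ^ p + (p - 1) * a ^ 2 - (t ^ p) ^ 2) / (t * t ^ p * (t ^ p + a) ^ 3)

lemma chi_pos (ha : 0 < a) {t : ℝ} (ht : 0 < t) : 0 < chi p a t := by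
  have : 0 < t ^ p := rpow_pos_of_pos ht p
  unfold chi
  positivity

lemma hasDerivAt_rpow_eq_div_chi (ha : 0 < a) {t : ℝ} (ht : 0 < t) :
    HasDerivAt (fun t => t ^ p) (p / chi p a t * (t ^ p + a)) t := by
  convert hasDerivAt_rpow_of_pos ht p using 1
  have : 0 < t ^ p := rpow_pos_of_pos ht p
  unfold chi
  field_simp

lemma hasDerivAt_chi (ha : 0 < a) {t : ℝ} (ht : 0 < t) :
    HasDerivAt (chi p a) (omega p a t * (t ^ p + a)) t := by
  have he := hasDerivAt_rpow_of_pos ht p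
  have : 0 < t ^ p := rpow_pos_of_pos ht p
  refine (((hasDerivAt_id' t).mul (he.add_const a)).div he this.ne').congr_deriv ?_
  unfold omega
  simp only [Pi.mul_apply]
  field_simp
  ring

lemma hasDerivAt_omega (ha : 0 < a) {t : ℝ} (ht : 0 < t) :
    HasDerivAt (omega p a) (omegaDeriv p a t * (t ^ p + a)) t := by
  have he := hasDerivAt_rpow_of_pos ht p
  have : 0 < t ^ p := rpow_pos_of_pos ht p
  have hρ : 0 < t ^ p + a := by linarith
  refine ((he.sub_const ((p - 1) * a)).div (he.mul (he.add_const a))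
    (mul_pos this hρ).ne').congr_deriv ?_
  unfold omegaDeriv
  simp only [Pi.mul_apply]
  field_simp
  ring

lemma hasDerivAt_omegaDeriv (ha : 0 < a) {t : ℝ} (ht : 0 < t) :
    HasDerivAt (omegaDeriv p a)
      (p * t ^ p * (t ^ p + a) ^ 2 * ((2 * p + 1) * (t ^ p) ^ 2 * (t ^ p - 3 * ((p - 1) * a))
        - (4 * p + 3) * a * ((p - 1) * a) * t ^ p - (p + 1) * a ^ 2 * ((p - 1) * a))
        / (t * t ^ p * (t ^ p + a) ^ 3) ^ 2) t := by
  have he := hasDerivAt_rpow_of_pos ht p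
  have : 0 < t ^ p := rpow_pos_of_pos ht p
  have hρ : 0 < t ^ p + a := by linarith
  have hD : t * t ^ p * (t ^ p + a) ^ 3 ≠ 0 := by positivity
  refine (((((he.const_mul (2 * (p - 1) * a)).add_const ((p - 1) * a ^ 2)).sub
    (he.pow 2)).const_mul p).div (((hasDerivAt_id' t).mul he).mul ((he.add_const a).pow 3))
    hD).congr_deriv ?_
  simp only [Pi.mul_apply, Pi.pow_apply, Pi.sub_apply]
  field_simp
  ring

/-- The radius `s` with `s ^ p = (p - 1) a`, where `τ ^ p` turns from convex to concave. -/
noncomputable def critRadius (p a : ℝ) : ℝ := ((p - 1) * a) ^ p⁻¹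

lemma critRadius_pos (hp : 1 < p) (ha : 0 < a) : 0 < critRadius p a :=
  rpow_pos_of_pos (mul_pos (by linarith) ha) _

lemma critRadius_rpow (hp : 1 < p) (ha : 0 < a) : critRadius p a ^ p = (p - 1) * a :=
  rpow_inv_rpow (mul_pos (by linarith) ha).le (by linarith)

lemma mass_critRadius (hp : 1 < p) (ha : 0 < a) :
    mass p a (critRadius p a) = 2 * p * a * critRadius p a / (p + 1) := by
  rw [mass_of_nonneg (by linarith) a (critRadius_pos hp ha).le,
    rpow_add_one (critRadius_pos hp ha).ne', critRadius_rpow hp ha]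
  field_simp
  ring

lemma two_mul_le_three_rpow_inv_mul (hp : 1 ≤ p) : 2 * p ≤ 3 ^ p⁻¹ * (2 * p - 1) := by
  have hp0 : 0 < p := by linarith
  have hlog : 1 ≤ log 3 := by
    rw [le_log_iff_exp_le (by norm_num)]
    linarith [exp_one_lt_d9]
  have h3 : 1 + p⁻¹ ≤ 3 ^ p⁻¹ := by
    rw [rpow_def_of_pos (by norm_num)]
    have : p⁻¹ ≤ log 3 * p⁻¹ := le_mul_of_one_le_left (by positivity) hlog
    linarith [add_one_le_exp (log 3 * p⁻¹)]
  calc 2 * p ≤ (1 + p⁻¹) * (2 * p - 1) := by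
        field_simp
        nlinarith
    _ ≤ 3 ^ p⁻¹ * (2 * p - 1) := by gcongr; linarith

lemma two_mul_mass_critRadius_le (hp : 1 < p) (ha : 0 < a) :
    2 * mass p a (critRadius p a) ≤ mass p a (3 ^ p⁻¹ * critRadius p a) := by
  have hs := critRadius_pos hp ha
  have h3 : (0 : ℝ) < 3 ^ p⁻¹ := by positivity
  rw [mass_critRadius hp ha, mass_of_nonneg (by linarith) a (by positivity),
    rpow_add_one (by positivity), mul_rpow h3.le hs.le, critRadius_rpow hp ha,
    rpow_inv_rpow (by norm_num) (by linarith)]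
  have := two_mul_le_three_rpow_inv_mul hp.le
  rw [div_add' _ _ _ (by linarith), mul_div_assoc', div_le_div_iff_of_pos_right (by linarith)]
  nlinarith [mul_pos ha hs]

lemma rpow_le_three_mul_of_mass_le (hp : 1 < p) (ha : 0 < a) {t : ℝ} (ht : 0 ≤ t)
    (h : mass p a t ≤ 2 * mass p a (critRadius p a)) : t ^ p ≤ 3 * ((p - 1) * a) := by
  have hts : t ≤ 3 ^ p⁻¹ * critRadius p a :=
    (mass_strictMono (by linarith) ha).le_iff_le.1 (h.trans (two_mul_mass_critRadius_le hp ha))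
  calc t ^ p ≤ (3 ^ p⁻¹ * critRadius p a) ^ p := rpow_le_rpow ht hts (by linarith)
    _ = 3 * ((p - 1) * a) := by
      rw [mul_rpow (by positivity) (critRadius_pos hp ha).le, critRadius_rpow hp ha,
        rpow_inv_rpow (by norm_num) (by linarith)]

variable {M₀ : ℝ}

lemma le_two_mul_mass_critRadius (hp : 1 < p) (ha : 0 < a) (hM : 0 ≤ M₀)
    (hcrit : ((p + 1) / (4 * p)) ^ (p / (p + 1)) * (p - 1) ^ (-(1 / (p + 1))) *
        M₀ ^ (p / (p + 1)) ≤ a) :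
    M₀ ≤ 2 * mass p a (critRadius p a) := by
  have hp0 : 0 < p := by linarith
  have hc : 0 < p - 1 := by linarith
  have hK : 0 < (p + 1) / (4 * p) := by positivity
  have h := rpow_le_rpow (by positivity) hcrit (by positivity : 0 ≤ (p / (p + 1))⁻¹)
  rw [mul_rpow (by positivity) (by positivity), mul_rpow (by positivity) (by positivity),
    ← rpow_mul hK.le, ← rpow_mul hc.le, ← rpow_mul hM, mul_inv_cancel₀ (by positivity),
    rpow_one, rpow_one, show -(1 / (p + 1)) * (p / (p + 1))⁻¹ = -p⁻¹ by field_simp,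
    show (p / (p + 1))⁻¹ = 1 + p⁻¹ by field_simp, rpow_add ha, rpow_one, rpow_neg hc.le] at h
  -- `h : (p + 1) / (4p) * ((p - 1) ^ p⁻¹)⁻¹ * M₀ ≤ a * a ^ p⁻¹`
  have hkey : (p + 1) / (4 * p) * M₀ ≤ a * critRadius p a := by
    have hcp : 0 < (p - 1) ^ p⁻¹ := by positivity
    calc (p + 1) / (4 * p) * M₀
        = (p + 1) / (4 * p) * ((p - 1) ^ p⁻¹)⁻¹ * M₀ * (p - 1) ^ p⁻¹ := by field_simp
      _ ≤ a * a ^ p⁻¹ * (p - 1) ^ p⁻¹ := by gcongr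
      _ = a * critRadius p a := by rw [critRadius, mul_rpow hc.le ha.le]; ring
  rw [div_mul_eq_mul_div, div_le_iff₀ (by positivity)] at hkey
  rw [mass_critRadius hp ha, mul_div_assoc', le_div_iff₀ (by positivity)]
  linarith

lemma omega_radius_half_nonpos (hp : 1 < p) (ha : 0 < a) (hM₀ : 0 ≤ M₀)
    (hM : M₀ ≤ 2 * mass p a (critRadius p a)) : omega p a (radius p a (M₀ / 2)) ≤ 0 := by
  have hp0 : 0 ≤ p := by linarith
  have ht : 0 ≤ radius p a (M₀ / 2) := by
    rw [← (mass_strictMono hp0 ha).le_iff_le, mass_radius hp0 ha, mass_zero]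
    linarith
  have hts : radius p a (M₀ / 2) ≤ critRadius p a := by
    rw [← (mass_strictMono hp0 ha).le_iff_le, mass_radius hp0 ha]
    linarith
  have hb : radius p a (M₀ / 2) ^ p ≤ (p - 1) * a :=
    critRadius_rpow hp ha ▸ rpow_le_rpow ht hts hp0
  unfold omega
  exact div_nonpos_of_nonpos_of_nonneg (by linarith) (by positivity)

lemma concaveOn_omega_radius (hp : 1 < p) (ha : 0 < a)
    (hM : M₀ ≤ 2 * mass p a (critRadius p a)) :
    ConcaveOn ℝ (Ioc 0 M₀) (fun m => omega p a (radius p a m)) := by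
  have hp0 : 0 ≤ p := by linarith
  have hτ : ∀ m ∈ Ioc 0 M₀, 0 < radius p a m := fun m hm => radius_pos hp0 ha hm.1
  refine concaveOn_of_hasDerivWithinAt2_nonpos (f' := fun m => omegaDeriv p a (radius p a m))
    (f'' := ?f'') (convex_Ioc 0 M₀) (fun m hm => ?cont) (fun m hm => ?d1) (fun m hm => ?d2)
    (fun m hm => ?sign)
  case cont =>
    exact (hasDerivAt_comp_radius_of_mul hp0 ha hm.1
      (hasDerivAt_omega ha (hτ m hm))).continuousAt.continuousWithinAt
  case d1 =>
    rw [interior_Ioc] at hm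
    exact (hasDerivAt_comp_radius_of_mul hp0 ha hm.1
      (hasDerivAt_omega ha (hτ m (Ioo_subset_Ioc_self hm)))).hasDerivWithinAt
  case d2 =>
    rw [interior_Ioc] at hm
    exact (hasDerivAt_comp_radius hp0 ha hm.1
      (hasDerivAt_omegaDeriv ha (hτ m (Ioo_subset_Ioc_self hm)))).hasDerivWithinAt
  case sign =>
    rw [interior_Ioc] at hm
    have ht := hτ m (Ioo_subset_Ioc_self hm)
    have he : 0 < radius p a m ^ p := rpow_pos_of_pos ht p
    have h3 : radius p a m ^ p ≤ 3 * ((p - 1) * a) :=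
      rpow_le_three_mul_of_mass_le hp ha ht.le (by rw [mass_radius hp0 ha]; linarith [hm.2])
    have hb : 0 < (p - 1) * a := mul_pos (by linarith) ha
    refine div_nonpos_of_nonpos_of_nonneg (div_nonpos_of_nonpos_of_nonneg
      (mul_nonpos_of_nonneg_of_nonpos (by positivity) ?_) (sq_nonneg _)) (by positivity)
    have : (2 * p + 1) * (radius p a m ^ p) ^ 2 * (radius p a m ^ p - 3 * ((p - 1) * a)) ≤ 0 :=
      mul_nonpos_of_nonneg_of_nonpos (by positivity) (by linarith)
    nlinarith [mul_pos (mul_pos ha hb) he, mul_pos (pow_pos ha 2) hb]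

lemma chi_radius_add_le (hp : 1 < p) (ha : 0 < a) (hM : M₀ ≤ 2 * mass p a (critRadius p a))
    {δ : ℝ} (hδ₀ : 0 ≤ δ) (hδ : δ < M₀ / 2) :
    chi p a (radius p a (M₀ / 2 + δ)) ≤ chi p a (radius p a (M₀ / 2 - δ)) := by
  have hp0 : 0 ≤ p := by linarith
  have hIcc : Icc (M₀ / 2 - δ) (M₀ / 2 + δ) ⊆ Ioc 0 M₀ := fun m hm =>
    ⟨by linarith [hm.1], by linarith [hm.2]⟩
  refine le_of_concaveOn_of_hasDerivAt (f := fun m => chi p a (radius p a m)) hδ₀ (fun m hm => ?_)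
    ((concaveOn_omega_radius hp ha hM).subset hIcc (convex_Icc _ _))
    (omega_radius_half_nonpos hp ha (by linarith) hM)
  exact hasDerivAt_comp_radius_of_mul hp0 ha (hIcc hm).1
    (hasDerivAt_chi ha (radius_pos hp0 ha (hIcc hm).1))

lemma two_mul_radius_half_rpow_le (hp : 1 < p) (ha : 0 < a)
    (hM : M₀ ≤ 2 * mass p a (critRadius p a)) {m : ℝ} (hm₀ : 0 ≤ m) (hm : m ≤ M₀ / 2) :
    2 * radius p a (M₀ / 2) ^ p ≤ radius p a m ^ p + radius p a (M₀ - m) ^ p := by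
  have hp0 : 0 ≤ p := by linarith
  have h := two_mul_le_add_of_hasDerivAt (f := fun m => radius p a m ^ p)
    (f' := fun m => p / chi p a (radius p a m)) (c := M₀ / 2) (d := M₀ / 2 - m) (by linarith)
    ((continuous_radius hp0 ha).rpow_const fun _ => Or.inr hp0).continuousOn
    (fun x hx => hasDerivAt_comp_radius_of_mul hp0 ha (by linarith [hx.1])
      (hasDerivAt_rpow_eq_div_chi ha (radius_pos hp0 ha (by linarith [hx.1]))))
    (fun δ hδ => div_le_div_of_nonneg_left hp0
      (chi_pos ha (radius_pos hp0 ha (by linarith [hδ.1, hδ.2])))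
      (chi_radius_add_le hp ha hM hδ.1.le (by linarith [hδ.1, hδ.2])))
  rwa [show M₀ / 2 - (M₀ / 2 - m) = m by ring, show M₀ / 2 + (M₀ / 2 - m) = M₀ - m by ring] at h

lemma two_mul_radius_half_rpow_le_of_mass_add_mass (hp : 1 < p) (ha : 0 < a)
    (hM : M₀ ≤ 2 * mass p a (critRadius p a)) {x y : ℝ} (hx : 0 ≤ x) (hy : 0 ≤ y)
    (hxy : mass p a x + mass p a y = M₀) : 2 * radius p a (M₀ / 2) ^ p ≤ x ^ p + y ^ p := by
  have hp0 : 0 ≤ p := by linarith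
  wlog hle : mass p a x ≤ M₀ / 2 generalizing x y
  · linarith [this hy hx (by linarith) (by linarith)]
  have h := two_mul_radius_half_rpow_le hp ha hM
    (by rw [← mass_zero p a]; exact (mass_strictMono hp0 ha).monotone hx) hle
  rwa [radius_mass hp0 ha, show M₀ - mass p a x = mass p a y by linarith, radius_mass hp0 ha] at h

end PowerDensity

open PowerDensity in
/-- For the density `ρ(x) = |x|^p + a` with `p > 1` and `a ≥ a_crit`, the symmetric
interval `[-β̄, β̄]` of weighted mass `M₀` has least weighted perimeter among all
intervals of weighted mass `M₀` containing the origin. -/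
theorem stmt_3 (p a M₀ : ℝ) (hp : 1 < p) (ha : 0 < a) (hM : 0 < M₀)
    (hcrit : ((p + 1) / (4 * p)) ^ (p / (p + 1)) * (p - 1) ^ (-(1 / (p + 1))) *
        M₀ ^ (p / (p + 1)) ≤ a) :
    ∃ βbar : ℝ, 0 < βbar ∧
      2 * βbar ^ (p + 1) / (p + 1) + 2 * a * βbar = M₀ ∧
      (∀ b : ℝ, 0 < b → 2 * b ^ (p + 1) / (p + 1) + 2 * a * b = M₀ → b = βbar) ∧
      (∀ α β : ℝ, α ≤ 0 → 0 ≤ β →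
        |α| ^ (p + 1) / (p + 1) + β ^ (p + 1) / (p + 1) + a * (|α| + β) = M₀ →
        2 * βbar ^ p + 2 * a ≤ |α| ^ p + β ^ p + 2 * a) := by
  have hp0 : 0 ≤ p := by linarith
  have hcrit' := le_two_mul_mass_critRadius hp ha hM.le hcrit
  have hmass : ∀ t, 0 ≤ t → mass p a t = t ^ (p + 1) / (p + 1) + a * t :=
    fun t ht => mass_of_nonneg hp0 a ht
  have hβ := mass_radius hp0 ha (M₀ / 2)
  rw [hmass _ (radius_pos hp0 ha (by linarith)).le] at hβ
  refine ⟨radius p a (M₀ / 2), radius_pos hp0 ha (by linarith), by linear_combination 2 * hβ,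
    fun b hb hbM => ?_, fun α β _ hβ₀ hαβ => ?_⟩
  · rw [← radius_mass hp0 ha b, hmass b hb.le]
    congr 1
    linear_combination hbM / 2
  · replace hαβ : mass p a |α| + mass p a β = M₀ := by
      rw [hmass _ (abs_nonneg α), hmass β hβ₀]
      linear_combination hαβ
    linarith [two_mul_radius_half_rpow_le_of_mass_add_mass hp ha hcrit' (abs_nonneg α) hβ₀ hαβ]
end

section
/- Let ρ(x) = x² + a with a > 0, let M₀ > 0, and suppose 0 < a ≤ a_crit := (1/4)·(3M₀)^(2/3). Then the minimum of the weighted perimeter α² + β² + 2a over all pairs (α, β) with α ≤ 0 ≤ β and β³/3 + aβ + |α|³/3 + a|α| = M₀ equals (3M₀)^(2/3) (in particular it is independent of a), and it is attained at β = (1/2)·[√((3M₀)^(2/3) - 4a) + (3M₀)^(1/3)] and α = -a/β, so that αβ = -a. -/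
/-!
Write `L = β - α` for the length of the interval. Expanding in `L` and `αβ` shows
`P · L = L³/3 + 2M` for the perimeter `P` and mass `M`, whatever `a` is. With `c³ = 3M₀` the
mass constraint gives `P = (L³ + 2c³) / (3L)`, and AM–GM on `L³, c³, c³` bounds this by `c²`,
with equality exactly when `L = c`. Such an interval with `αβ = -a` exists as soon as the
quadratic `β² - cβ + a` has a real root, i.e. `4a ≤ c²`.
-/

/-- The weighted mass of `[α, β]`, for `α ≤ 0 ≤ β`, under the density `x² + a`. -/
noncomputable def weightedMass (a α β : ℝ) : ℝ := β ^ 3 / 3 + a * β + |α| ^ 3 / 3 + a * |α|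

def weightedPerimeter (a α β : ℝ) : ℝ := α ^ 2 + β ^ 2 + 2 * a

theorem weightedPerimeter_mul_sub {α : ℝ} (a β : ℝ) (hα : α ≤ 0) :
    weightedPerimeter a α β * (β - α) = (β - α) ^ 3 / 3 + 2 * weightedMass a α β := by
  rw [weightedPerimeter, weightedMass, abs_of_nonpos hα]
  ring

theorem three_mul_sq_mul_le_cube_add_two_mul_cube {x y : ℝ} (hx : 0 ≤ x) (hy : 0 ≤ y) :
    3 * y ^ 2 * x ≤ x ^ 3 + 2 * y ^ 3 := by
  nlinarith [mul_nonneg (sq_nonneg (x - y)) (by linarith : 0 ≤ x + 2 * y)]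

theorem sq_le_weightedPerimeter {a α β c : ℝ} (hα : α ≤ 0) (hβ : 0 ≤ β) (hc : 0 < c)
    (hmass : weightedMass a α β = c ^ 3 / 3) : c ^ 2 ≤ weightedPerimeter a α β := by
  have hlen : 0 < β - α := by
    rcases hα.lt_or_eq with hα' | rfl
    · linarith
    rcases hβ.lt_or_eq with hβ' | rfl
    · linarith
    · norm_num [weightedMass] at hmass
      linarith [pow_pos hc 3]
  refine le_of_mul_le_mul_right ?_ hlen
  rw [weightedPerimeter_mul_sub a β hα, hmass]
  nlinarith [three_mul_sq_mul_le_cube_add_two_mul_cube hlen.le hc.le]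

theorem weightedPerimeter_eq_sq {a α β c : ℝ} (hsub : β - α = c) (hprod : α * β = -a) :
    weightedPerimeter a α β = c ^ 2 := by
  rw [weightedPerimeter, ← hsub]
  linear_combination 2 * hprod

theorem weightedMass_eq_cube_div_three {a α β c : ℝ} (hα : α ≤ 0) (hsub : β - α = c)
    (hprod : α * β = -a) : weightedMass a α β = c ^ 3 / 3 := by
  have h := weightedPerimeter_mul_sub a β hα
  rw [weightedPerimeter_eq_sq hsub hprod, hsub] at h
  linarith

theorem larger_root_mul_sub {a c : ℝ} (h : 4 * a ≤ c ^ 2) :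
    (1 / 2 * (√(c ^ 2 - 4 * a) + c)) * (c - 1 / 2 * (√(c ^ 2 - 4 * a) + c)) = a := by
  linear_combination (-1 / 4 : ℝ) * Real.sq_sqrt (sub_nonneg.mpr h)

theorem rpow_one_third_pow_three {x : ℝ} (hx : 0 ≤ x) : (x ^ ((1 : ℝ) / 3)) ^ 3 = x := by
  rw [← Real.rpow_natCast, ← Real.rpow_mul hx]
  norm_num

theorem rpow_two_thirds_eq_sq {x : ℝ} (hx : 0 ≤ x) :
    x ^ ((2 : ℝ) / 3) = (x ^ ((1 : ℝ) / 3)) ^ 2 := by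
  rw [← Real.rpow_natCast, ← Real.rpow_mul hx]
  norm_num

/-- For the density `ρ(x) = x² + a` with `0 < a ≤ (1/4)(3M₀)^(2/3)`, the minimum
weighted perimeter `α² + β² + 2a` over intervals `[α, β]` (with `α ≤ 0 ≤ β`) of
weighted mass `M₀` equals `(3M₀)^(2/3)` (independent of `a`), attained at
`β = (1/2)(√((3M₀)^(2/3) - 4a) + (3M₀)^(1/3))` and `α = -a/β`, so `αβ = -a`. -/
theorem stmt_4 (a M₀ : ℝ) (ha : 0 < a) (hM : 0 < M₀)
    (hcrit : a ≤ (1 / 4) * (3 * M₀) ^ ((2 : ℝ) / 3)) :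
    (∀ α β : ℝ, α ≤ 0 → 0 ≤ β →
      β ^ 3 / 3 + a * β + |α| ^ 3 / 3 + a * |α| = M₀ →
      (3 * M₀) ^ ((2 : ℝ) / 3) ≤ α ^ 2 + β ^ 2 + 2 * a) ∧
    (let β₀ : ℝ := (1 / 2) *
        (Real.sqrt ((3 * M₀) ^ ((2 : ℝ) / 3) - 4 * a) + (3 * M₀) ^ ((1 : ℝ) / 3));
     let α₀ : ℝ := -a / β₀;
     α₀ ≤ 0 ∧ 0 ≤ β₀ ∧
      β₀ ^ 3 / 3 + a * β₀ + |α₀| ^ 3 / 3 + a * |α₀| = M₀ ∧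
      α₀ ^ 2 + β₀ ^ 2 + 2 * a = (3 * M₀) ^ ((2 : ℝ) / 3) ∧
      α₀ * β₀ = -a) := by
  have h3M : 0 ≤ 3 * M₀ := by positivity
  have hc : 0 < (3 * M₀) ^ ((1 : ℝ) / 3) := Real.rpow_pos_of_pos (by positivity) _
  have hM₀ : M₀ = ((3 * M₀) ^ ((1 : ℝ) / 3)) ^ 3 / 3 := by
    rw [rpow_one_third_pow_three h3M]; ring
  rw [rpow_two_thirds_eq_sq h3M] at hcrit ⊢
  set c := (3 * M₀) ^ ((1 : ℝ) / 3)
  refine ⟨fun α β hα hβ hmass => sq_le_weightedPerimeter hα hβ hc (hmass.trans hM₀), ?_⟩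
  intro β₀ α₀
  have hβ₀ : 0 < β₀ := by positivity
  have hroot : β₀ * (c - β₀) = a := larger_root_mul_sub (by linarith)
  have hα₀ : α₀ = β₀ - c := by
    show -a / β₀ = β₀ - c
    rw [← hroot, neg_div, mul_div_cancel_left₀ _ hβ₀.ne']
    ring
  have hsub : β₀ - α₀ = c := by linarith
  have hprod : α₀ * β₀ = -a := by rw [hα₀]; linear_combination -hroot
  have hα₀_nonpos : α₀ ≤ 0 := div_nonpos_of_nonpos_of_nonneg (by linarith) hβ₀.le
  exact ⟨hα₀_nonpos, hβ₀.le, (weightedMass_eq_cube_div_three hα₀_nonpos hsub hprod).trans hM₀.symm,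
    weightedPerimeter_eq_sq hsub hprod, hprod⟩
end

section
/- Let ρ(x) = x² + a with a > 0, let M₀ > 0, and suppose a ≥ a_crit := (1/4)·(3M₀)^(2/3). Set k = ((3M₀ + √(9M₀² + 16a³))/4)^(2/3), so that 4k^(3/2) = 3M₀ + √(9M₀² + 16a³). Then the minimum of the weighted perimeter α² + β² + 2a over all pairs (α, β) with α ≤ 0 ≤ β and β³/3 + aβ + |α|³/3 + a|α| = M₀ equals 2k + 2a²/k - 2a, and it is attained at the symmetric interval with β = -α = √k - a/√k. -/
/-!
Write `f x = x³/3 + a x` for the mass of `[0, x]`. The perimeter depends on the endpoints only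
through `u² + v²` (with `u = |α|`, `v = β`), and for `S = u + v` the mass constraint gives
`S (u² + v²) = S³/3 - 2aS + 4 f(b)`, where `f(b) = M₀/2` defines the symmetric half-length `b`.
Convexity of `f` forces `S ≤ 2b`, and for `b² ≤ a` the right-hand side minus `2b² S` factors as
`(2b - S) · Q` with `Q ≥ 0`, so `u² + v² ≥ 2b²`. Criticality says `9M₀² ≤ 64a³`, i.e. `b² ≤ a`.
Finally `b = s - a/s` with `s³ = t` the positive root of `2t² = 3M₀ t + 2a³`, which is how
`k = s²` enters.
-/

section CubicMass

variable {a b u v : ℝ}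

lemma add_le_two_mul_of_cubic_mass_eq (ha : 0 ≤ a) (hb : 0 ≤ b) (hu : 0 ≤ u) (hv : 0 ≤ v)
    (h : u ^ 3 / 3 + a * u + v ^ 3 / 3 + a * v = 2 * (b ^ 3 / 3 + a * b)) :
    u + v ≤ 2 * b := by
  by_contra! hlt
  -- convexity of `x ↦ x³`: `u³ + v³ ≥ (u + v)³ / 4`
  have hconv : (u + v) ^ 3 / 12 + a * (u + v) ≤ 2 * (b ^ 3 / 3 + a * b) := by
    nlinarith [mul_nonneg (add_nonneg hu hv) (sq_nonneg (u - v))]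
  have hcube : (2 * b) ^ 3 < (u + v) ^ 3 := pow_lt_pow_left₀ hlt (by positivity) (by norm_num)
  nlinarith [mul_le_mul_of_nonneg_left hlt.le ha]

lemma two_mul_sq_le_sq_add_sq_of_cubic_mass_eq (hb : 0 < b) (hba : b ^ 2 ≤ a)
    (hu : 0 ≤ u) (hv : 0 ≤ v)
    (h : u ^ 3 / 3 + a * u + v ^ 3 / 3 + a * v = 2 * (b ^ 3 / 3 + a * b)) :
    2 * b ^ 2 ≤ u ^ 2 + v ^ 2 := by
  have ha : 0 ≤ a := (sq_nonneg b).trans hba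
  have hS : u + v ≤ 2 * b := add_le_two_mul_of_cubic_mass_eq ha hb.le hu hv h
  have hSpos : 0 < u + v := by
    by_contra! hS0
    obtain ⟨rfl, rfl⟩ : u = 0 ∧ v = 0 := ⟨by linarith, by linarith⟩
    nlinarith [pow_pos hb 3]
  have hfactor : (u + v) * (u ^ 2 + v ^ 2 - 2 * b ^ 2) =
      (2 * b - (u + v)) * (2 * a + 2 * b ^ 2 / 3 - (u + v) ^ 2 / 3 - 2 * b * (u + v) / 3) := by
    linear_combination 2 * h
  have hQ : 0 ≤ 2 * a + 2 * b ^ 2 / 3 - (u + v) ^ 2 / 3 - 2 * b * (u + v) / 3 := by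
    nlinarith [mul_le_mul hS hS hSpos.le (by positivity), mul_le_mul_of_nonneg_left hS hb.le]
  have := (mul_nonneg_iff_of_pos_left hSpos).1 (hfactor ▸ mul_nonneg (by linarith) hQ)
  linarith

lemma sq_le_of_cubic_mass_eq {M : ℝ} (hmass : b ^ 3 / 3 + a * b = M / 2)
    (hcrit : 9 * M ^ 2 ≤ 64 * a ^ 3) : b ^ 2 ≤ a := by
  have ha : 0 ≤ a := by
    by_contra! ha
    nlinarith [pow_pos (neg_pos.2 ha) 3, sq_nonneg M]
  by_contra! hab
  have hM : 3 * M = 2 * b * (b ^ 2 + 3 * a) := by linear_combination -6 * hmass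
  have hlt : a * (4 * a) ^ 2 < b ^ 2 * (b ^ 2 + 3 * a) ^ 2 :=
    mul_lt_mul'' hab (pow_lt_pow_left₀ (by linarith) (by positivity) two_ne_zero) ha (by positivity)
  have hsq : 9 * M ^ 2 = 4 * (b ^ 2 * (b ^ 2 + 3 * a) ^ 2) := by
    rw [show 9 * M ^ 2 = (3 * M) ^ 2 by ring, hM]
    ring
  linarith

end CubicMass

section PositiveRoot

variable {a M s : ℝ}

lemma lt_sq_of_root (hM : 0 < M) (hs : 0 < s) (hroot : 2 * (s ^ 3) ^ 2 = 3 * M * s ^ 3 + 2 * a ^ 3) :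
    a < s ^ 2 :=
  lt_of_pow_lt_pow_left₀ 3 (by positivity) (by nlinarith [pow_pos hs 3])

lemma cubic_mass_sub_div (hs : 0 < s) (hroot : 2 * (s ^ 3) ^ 2 = 3 * M * s ^ 3 + 2 * a ^ 3) :
    (s - a / s) ^ 3 / 3 + a * (s - a / s) = M / 2 := by
  field_simp
  linear_combination hroot

end PositiveRoot

lemma two_mul_sq_eq_of_sqrt_discr {a M : ℝ} (ha : 0 ≤ a) :
    2 * ((3 * M + √(9 * M ^ 2 + 16 * a ^ 3)) / 4) ^ 2 =
      3 * M * ((3 * M + √(9 * M ^ 2 + 16 * a ^ 3)) / 4) + 2 * a ^ 3 := by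
  linear_combination Real.sq_sqrt (by positivity : 0 ≤ 9 * M ^ 2 + 16 * a ^ 3) / 8

lemma sq_le_of_rpow_two_thirds_le {a x : ℝ} (hx : 0 ≤ x) (h : (1 / 4) * x ^ ((2 : ℝ) / 3) ≤ a) :
    x ^ 2 ≤ 64 * a ^ 3 := by
  have hcube := pow_le_pow_left₀ (by positivity) (show x ^ ((2 : ℝ) / 3) ≤ 4 * a by linarith) 3
  rw [← Real.rpow_natCast, ← Real.rpow_mul hx, show (2 : ℝ) / 3 * (3 : ℕ) = (2 : ℕ) by norm_num,
    Real.rpow_natCast] at hcube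
  linear_combination hcube

lemma rpow_two_thirds_rpow_three_halves {t : ℝ} (ht : 0 ≤ t) :
    (t ^ ((2 : ℝ) / 3)) ^ ((3 : ℝ) / 2) = t := by
  rw [← Real.rpow_mul ht, show (2 : ℝ) / 3 * (3 / 2) = 1 by norm_num, Real.rpow_one]

lemma sqrt_rpow_two_thirds_pow_three {t : ℝ} (ht : 0 ≤ t) : √(t ^ ((2 : ℝ) / 3)) ^ 3 = t := by
  rw [Real.sqrt_eq_rpow, ← Real.rpow_mul ht,
    show (2 : ℝ) / 3 * (1 / 2) = ((3 : ℕ) : ℝ)⁻¹ by norm_num, Real.rpow_inv_natCast_pow ht three_ne_zero]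

/-- For the density `ρ(x) = x² + a` with `a ≥ (1/4)(3M₀)^(2/3)`, and
`k = ((3M₀ + √(9M₀² + 16a³))/4)^(2/3)`, the minimum weighted perimeter
`α² + β² + 2a` over intervals `[α, β]` (with `α ≤ 0 ≤ β`) of weighted mass `M₀`
equals `2k + 2a²/k - 2a`, attained at the symmetric interval with
`β = -α = √k - a/√k`. -/
theorem stmt_5 (a M₀ : ℝ) (ha : 0 < a) (hM : 0 < M₀)
    (hcrit : (1 / 4) * (3 * M₀) ^ ((2 : ℝ) / 3) ≤ a) :
    let k : ℝ := ((3 * M₀ + Real.sqrt (9 * M₀ ^ 2 + 16 * a ^ 3)) / 4) ^ ((2 : ℝ) / 3);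
    4 * k ^ ((3 : ℝ) / 2) = 3 * M₀ + Real.sqrt (9 * M₀ ^ 2 + 16 * a ^ 3) ∧
    (∀ α β : ℝ, α ≤ 0 → 0 ≤ β →
      β ^ 3 / 3 + a * β + |α| ^ 3 / 3 + a * |α| = M₀ →
      2 * k + 2 * a ^ 2 / k - 2 * a ≤ α ^ 2 + β ^ 2 + 2 * a) ∧
    (let β₀ : ℝ := Real.sqrt k - a / Real.sqrt k;
     let α₀ : ℝ := -β₀;
     α₀ ≤ 0 ∧ 0 ≤ β₀ ∧
      β₀ ^ 3 / 3 + a * β₀ + |α₀| ^ 3 / 3 + a * |α₀| = M₀ ∧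
      α₀ ^ 2 + β₀ ^ 2 + 2 * a = 2 * k + 2 * a ^ 2 / k - 2 * a) := by
  intro k
  set t := (3 * M₀ + √(9 * M₀ ^ 2 + 16 * a ^ 3)) / 4 with ht_def
  have ht : 0 < t := by positivity
  have hs3 : √k ^ 3 = t := sqrt_rpow_two_thirds_pow_three ht.le
  have hs : 0 < √k := by positivity
  have hroot := two_mul_sq_eq_of_sqrt_discr (M := M₀) ha.le
  rw [← ht_def, ← hs3] at hroot
  set b := √k - a / √k
  have hb : 0 < b := by
    have := lt_sq_of_root hM hs hroot
    rw [sub_pos, div_lt_iff₀ hs]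
    nlinarith
  have hmass : b ^ 3 / 3 + a * b = M₀ / 2 := cubic_mass_sub_div hs hroot
  have hb2 : 2 * k + 2 * a ^ 2 / k - 2 * a = 2 * b ^ 2 + 2 * a := by
    have hsq : 2 * √k ^ 2 + 2 * a ^ 2 / √k ^ 2 - 2 * a = 2 * b ^ 2 + 2 * a := by
      simp only [b]
      field_simp
      ring
    rwa [Real.sq_sqrt (by positivity)] at hsq
  have hba : b ^ 2 ≤ a :=
    sq_le_of_cubic_mass_eq hmass (by nlinarith [sq_le_of_rpow_two_thirds_le (by positivity) hcrit])
  refine ⟨by rw [rpow_two_thirds_rpow_three_halves ht.le]; ring, fun α β hα hβ h => ?_, ?_⟩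
  · rw [abs_of_nonpos hα] at h
    have := two_mul_sq_le_sq_add_sq_of_cubic_mass_eq hb hba (neg_nonneg.2 hα) hβ
      (by linear_combination h - 2 * hmass)
    linarith [neg_sq α]
  · refine ⟨by linarith, hb.le, ?_, by rw [hb2]; ring⟩
    rw [abs_neg, abs_of_pos hb]
    linarith
end

section
/- Let ρ(x) = |x|^p + a with 0 < p < 1 and a > 0, and let M₀ > 0. Then there is a unique β > 0 satisfying β^(p+1) = (p+1)(M₀ - aβ), and for every pair (α', β') with α' ≤ 0 ≤ β' and |α'|^(p+1)/(p+1) + β'^(p+1)/(p+1) + a(|α'| + β') = M₀, one has |α'|^p + β'^p + 2a ≥ β^p + 2a; that is, the interval [0, β] with one end at the origin has least weighted perimeter, equal to β^p + 2a, among intervals of weighted mass M₀ that contain the origin. -/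
/-!
Multiply the mass constraint by `p + 1` and write `g t = t^(p+1) + (p+1) a t`, so that an interval
`[-x, y]` around the origin has mass `M₀` iff `g x + g y = (p+1) M₀`. The function `g` increases
from `0` to `∞`, which gives the unique `β` with `g β = (p+1) M₀`. Since `t ↦ t^(p+1)` is
superadditive, `g (x + y) ≥ g x + g y = g β`, hence `x + y ≥ β`; then
`x^p + y^p ≥ (x + y)^p ≥ β^p` because `t ↦ t^p` is subadditive and monotone for `0 < p < 1`.
-/

open Set

namespace WeightedPerimeter

/-- `(p + 1)` times the weighted mass of `[0, t]`. -/
noncomputable def massProfile (p a t : ℝ) : ℝ := t ^ (p + 1) + (p + 1) * a * t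

variable {p a : ℝ}

lemma massProfile_zero (hp : 0 < p + 1) : massProfile p a 0 = 0 := by
  simp [massProfile, Real.zero_rpow hp.ne']

lemma continuous_massProfile (hp : 0 < p + 1) : Continuous (massProfile p a) :=
  (Real.continuous_rpow_const hp.le).add (continuous_const.mul continuous_id)

lemma strictMonoOn_massProfile (hp : 0 < p + 1) (ha : 0 ≤ a) :
    StrictMonoOn (massProfile p a) (Ici 0) := fun _ hx _ _ hxy =>
  add_lt_add_of_lt_of_le (Real.rpow_lt_rpow hx hxy hp)
    (mul_le_mul_of_nonneg_left hxy.le (mul_nonneg hp.le ha))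

lemma exists_pos_massProfile_eq (hp : 0 < p + 1) (ha : 0 < a) {c : ℝ} (hc : 0 < c) :
    ∃ β, 0 < β ∧ massProfile p a β = c := by
  set T := c / ((p + 1) * a)
  have hT : 0 ≤ T := by positivity
  have hgT : c ≤ massProfile p a T := by
    have hlin : (p + 1) * a * T = c := mul_div_cancel₀ c (by positivity)
    rw [massProfile, hlin]
    linarith [Real.rpow_nonneg hT (p + 1)]
  obtain ⟨β, hβT, hβ⟩ := intermediate_value_Icc hT (continuous_massProfile hp).continuousOn
    ⟨(massProfile_zero hp).le.trans hc.le, hgT⟩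
  refine ⟨β, hβT.1.lt_of_ne ?_, hβ⟩
  rintro rfl
  rw [massProfile_zero hp] at hβ
  exact hc.ne hβ

lemma massProfile_add_le (hp : 0 ≤ p) {x y : ℝ} (hx : 0 ≤ x) (hy : 0 ≤ y) :
    massProfile p a x + massProfile p a y ≤ massProfile p a (x + y) := by
  have := Real.add_rpow_le_rpow_add hx hy (by linarith : 1 ≤ p + 1)
  simp only [massProfile]
  linarith

lemma massProfile_eq_iff {b M : ℝ} :
    massProfile p a b = (p + 1) * M ↔ b ^ (p + 1) = (p + 1) * (M - a * b) := by
  constructor <;> intro h <;> simp only [massProfile] at * <;> linarith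

lemma massProfile_add_eq_iff (hp : 0 < p + 1) {x y M : ℝ} :
    x ^ (p + 1) / (p + 1) + y ^ (p + 1) / (p + 1) + a * (x + y) = M ↔
      massProfile p a x + massProfile p a y = (p + 1) * M := by
  rw [← mul_right_inj' hp.ne', mul_add, mul_add, mul_div_cancel₀ _ hp.ne',
    mul_div_cancel₀ _ hp.ne']
  simp only [massProfile]
  constructor <;> intro h <;> linarith

end WeightedPerimeter

open WeightedPerimeter in
/-- For the density `ρ(x) = |x|^p + a` with `0 < p < 1`, there is a unique `β > 0`
with `β^(p+1) = (p+1)(M₀ - aβ)`, and the interval `[0, β]` has least weighted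
perimeter `β^p + 2a` among all intervals of weighted mass `M₀` containing the
origin. -/
theorem stmt_7 (p a M₀ : ℝ) (hp0 : 0 < p) (hp1 : p < 1) (ha : 0 < a) (hM : 0 < M₀) :
    ∃ β : ℝ, 0 < β ∧
      β ^ (p + 1) = (p + 1) * (M₀ - a * β) ∧
      (∀ b : ℝ, 0 < b → b ^ (p + 1) = (p + 1) * (M₀ - a * b) → b = β) ∧
      (∀ α' β' : ℝ, α' ≤ 0 → 0 ≤ β' →
        |α'| ^ (p + 1) / (p + 1) + β' ^ (p + 1) / (p + 1) + a * (|α'| + β') = M₀ →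
        β ^ p + 2 * a ≤ |α'| ^ p + β' ^ p + 2 * a) := by
  have hp : 0 < p + 1 := by linarith
  have hmono := strictMonoOn_massProfile hp ha.le
  obtain ⟨β, hβ, hgβ⟩ := exists_pos_massProfile_eq hp ha (mul_pos hp hM)
  refine ⟨β, hβ, massProfile_eq_iff.1 hgβ, fun b hb hgb => ?_, fun α' β' _ hβ' hmass => ?_⟩
  · exact hmono.injOn (mem_Ici.2 hb.le) (mem_Ici.2 hβ.le)
      ((massProfile_eq_iff.2 hgb).trans hgβ.symm)
  · have hx := abs_nonneg α'
    have hle : β ≤ |α'| + β' := by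
      refine (hmono.le_iff_le (mem_Ici.2 hβ.le) (mem_Ici.2 (add_nonneg hx hβ'))).1 ?_
      rw [hgβ, ← (massProfile_add_eq_iff hp).1 hmass]
      exact massProfile_add_le hp0.le hx hβ'
    have hsub := Real.rpow_add_le_add_rpow hx hβ' hp0.le hp1.le
    linarith [Real.rpow_le_rpow hβ.le hle hp0.le]
end

section
/- Let ρ: ℝ → ℝ be continuous, strictly positive, and monotone increasing on [0, ∞). Let 0 < α₁ < β₁ < α₂ < β₂. Then there exists β₃ ∈ (β₁, β₂] such that ∫_{β₁}^{β₃} ρ(x) dx = ∫_{α₂}^{β₂} ρ(x) dx, and the single interval [α₁, β₃] has the same total weighted mass as the two intervals [α₁,β₁] and [α₂,β₂] together, with strictly smaller weighted perimeter: ρ(α₁) + ρ(β₃) < ρ(α₁) + ρ(β₁) + ρ(α₂) + ρ(β₂). -/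
/-!
Slide `[α₂, β₂]` to the left until it abuts `[α₁, β₁]`: by the intermediate value theorem for
`t ↦ ∫ x in β₁..t, ρ x` the mass is matched at some `β₃ ≤ β₂`. The merged interval loses the two
positive boundary terms `ρ β₁` and `ρ α₂`, and `ρ β₃ ≤ ρ β₂` by monotonicity.
-/

open Set intervalIntegral MeasureTheory

theorem exists_integral_eq_of_pos_of_le {ρ : ℝ → ℝ} (hρ : Continuous ρ) {a b m : ℝ}
    (hab : a ≤ b) (hm : 0 < m) (hmb : m ≤ ∫ x in a..b, ρ x) :
    ∃ c ∈ Ioc a b, ∫ x in a..c, ρ x = m := by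
  have hF : ContinuousOn (fun t => ∫ x in a..t, ρ x) (Icc a b) :=
    (continuous_primitive (fun _ _ => hρ.intervalIntegrable _ _) a).continuousOn
  exact intermediate_value_Ioc hab hF ⟨by simpa using hm, hmb⟩

/-- For a continuous, positive, monotone increasing density on `[0, ∞)`, two disjoint
intervals `[α₁, β₁]` and `[α₂, β₂]` in the positive half-line can be concatenated into
a single interval `[α₁, β₃]` of the same total weighted mass and strictly smaller
weighted perimeter. -/
theorem stmt_11 (ρ : ℝ → ℝ) (hcont : Continuous ρ)
    (hpos : ∀ x ∈ Set.Ici (0 : ℝ), 0 < ρ x)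
    (hmono : MonotoneOn ρ (Set.Ici (0 : ℝ)))
    (α₁ β₁ α₂ β₂ : ℝ) (h1 : 0 < α₁) (h2 : α₁ < β₁) (h3 : β₁ < α₂) (h4 : α₂ < β₂) :
    ∃ β₃ ∈ Set.Ioc β₁ β₂,
      (∫ x in β₁..β₃, ρ x) = (∫ x in α₂..β₂, ρ x) ∧
      (∫ x in α₁..β₃, ρ x) = (∫ x in α₁..β₁, ρ x) + (∫ x in α₂..β₂, ρ x) ∧
      ρ α₁ + ρ β₃ < ρ α₁ + ρ β₁ + ρ α₂ + ρ β₂ := by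
  have hβ₁ : 0 ≤ β₁ := (h1.trans h2).le
  have hρ_pos : ∀ x, β₁ ≤ x → 0 < ρ x := fun x hx => hpos x (hβ₁.trans hx)
  have hmass_pos : 0 < ∫ x in α₂..β₂, ρ x :=
    intervalIntegral_pos_of_pos_on (hcont.intervalIntegrable _ _)
      (fun x hx => hρ_pos x (h3.le.trans hx.1.le)) h4
  have hmass_le : (∫ x in α₂..β₂, ρ x) ≤ ∫ x in β₁..β₂, ρ x :=
    integral_mono_interval h3.le h4.le le_rfl
      (ae_restrict_of_forall_mem measurableSet_Ioc fun x hx => (hρ_pos x hx.1.le).le)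
      (hcont.intervalIntegrable _ _)
  obtain ⟨β₃, hβ₃, hmass⟩ :=
    exists_integral_eq_of_pos_of_le hcont (h3.trans h4).le hmass_pos hmass_le
  refine ⟨β₃, hβ₃, hmass, ?_, ?_⟩
  · rw [← hmass, integral_add_adjacent_intervals (hcont.intervalIntegrable _ _)
      (hcont.intervalIntegrable _ _)]
  · have hρβ₃ : ρ β₃ ≤ ρ β₂ :=
      hmono (hβ₁.trans hβ₃.1.le) (hβ₁.trans (h3.trans h4).le) hβ₃.2
    linarith [hρ_pos β₁ le_rfl, hρ_pos α₂ h3.le]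
end

section
/- Let ρ: ℝ → ℝ be continuous, strictly positive, and strictly increasing on [0, ∞). Let 0 < α₁ < β₁. Then there exists β₂ ∈ (0, β₁) such that ∫_0^{β₂} ρ(x) dx = ∫_{α₁}^{β₁} ρ(x) dx, and the interval [0, β₂] has strictly smaller weighted perimeter than [α₁, β₁]: ρ(0) + ρ(β₂) < ρ(α₁) + ρ(β₁). -/
/-!
The mass `t ↦ ∫₀ᵗ ρ` is continuous, vanishes at `0` and exceeds `∫_{α₁}^{β₁} ρ` at `β₁`
(the surplus being `∫₀^{α₁} ρ > 0`), so the intermediate value theorem gives `β₂ < β₁` of the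
right mass. Since `ρ` is increasing, `ρ 0 < ρ α₁` and `ρ β₂ < ρ β₁`.
-/

open Set intervalIntegral

theorem exists_mem_Ioo_integral_eq_integral {ρ : ℝ → ℝ} (hcont : Continuous ρ)
    {a α β : ℝ} (haα : a < α) (hαβ : α < β) (hpos : ∀ x ∈ Ioo a β, 0 < ρ x) :
    ∃ γ ∈ Ioo a β, ∫ x in a..γ, ρ x = ∫ x in α..β, ρ x := by
  have hint : ∀ u v : ℝ, IntervalIntegrable ρ MeasureTheory.volume u v :=
    hcont.intervalIntegrable
  have hhead : 0 < ∫ x in a..α, ρ x :=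
    intervalIntegral_pos_of_pos_on (hint a α)
      (fun x hx => hpos x ⟨hx.1, hx.2.trans hαβ⟩) haα
  have htail : 0 < ∫ x in α..β, ρ x :=
    intervalIntegral_pos_of_pos_on (hint α β)
      (fun x hx => hpos x ⟨haα.trans hx.1, hx.2⟩) hαβ
  have hsplit := integral_add_adjacent_intervals (hint a α) (hint α β)
  have hmem : ∫ x in α..β, ρ x ∈ Ioo (∫ x in a..a, ρ x) (∫ x in a..β, ρ x) := by
    rw [integral_same]
    constructor <;> linarith
  exact intermediate_value_Ioo (haα.trans hαβ).le
    (continuous_primitive hint a).continuousOn hmem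

/-- For a continuous, positive, strictly increasing density on `[0, ∞)`, an interval
`[α₁, β₁]` in the positive half-line can be moved to an interval `[0, β₂]` with one end
at the origin, of the same weighted mass and strictly smaller weighted perimeter. -/
theorem stmt_12 (ρ : ℝ → ℝ) (hcont : Continuous ρ)
    (hpos : ∀ x ∈ Set.Ici (0 : ℝ), 0 < ρ x)
    (hmono : StrictMonoOn ρ (Set.Ici (0 : ℝ)))
    (α₁ β₁ : ℝ) (h1 : 0 < α₁) (h2 : α₁ < β₁) :
    ∃ β₂ ∈ Set.Ioo (0 : ℝ) β₁,
      (∫ x in (0 : ℝ)..β₂, ρ x) = (∫ x in α₁..β₁, ρ x) ∧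
      ρ 0 + ρ β₂ < ρ α₁ + ρ β₁ := by
  obtain ⟨β₂, hβ₂, hmass⟩ :=
    exists_mem_Ioo_integral_eq_integral hcont h1 h2 fun x hx => hpos x hx.1.le
  have hleft : ρ 0 < ρ α₁ := hmono self_mem_Ici h1.le h1
  have hright : ρ β₂ < ρ β₁ := hmono hβ₂.1.le (h1.trans h2).le hβ₂.2
  exact ⟨β₂, hβ₂, hmass, by linarith⟩
end

section
/- Let M₀ > 0 and 0 < a ≤ a_crit := (2M₀/(3π))^(1/2). Then the minimum of the function P(R, r₀) = 2π(R³ + R·r₀² + R·a) over all R > 0 and r₀ ≥ 0 satisfying (π/2)·(R⁴ + 2R²r₀² + 2R²a) = M₀ equals 4π·(2M₀/(3π))^(3/4) (in particular it is independent of a), and it is attained at R = (2M₀/(3π))^(1/4) and r₀ = √(R² - a), i.e. where R² = r₀² + a. -/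
/-!
Put `t = (2M₀/(3π))^(1/4)`. The mass constraint reads `R⁴ + 2R²(r₀² + a) = 3t⁴`, so
`R · (R³ + R(r₀² + a)) = (R⁴ + 3t⁴)/2`, and the weighted AM–GM inequality `4Rt³ ≤ R⁴ + 3t⁴`
bounds the perimeter below by `4πt³`, with equality iff `R = t`. The bound is attained by a
circle with `r₀ ≥ 0` exactly when `r₀² = t² - a ≥ 0`, which is the hypothesis `a ≤ t²`.
-/

open Real

theorem four_mul_mul_pow_three_le (x y : ℝ) : 4 * x * y ^ 3 ≤ x ^ 4 + 3 * y ^ 4 := by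
  have h : x ^ 4 + 3 * y ^ 4 - 4 * x * y ^ 3 = (x - y) ^ 2 * ((x + y) ^ 2 + 2 * y ^ 2) := by ring
  nlinarith [h, show 0 ≤ (x - y) ^ 2 * ((x + y) ^ 2 + 2 * y ^ 2) by positivity]

theorem two_mul_pow_three_le_of_pow_four_add {R s t : ℝ} (hR : 0 < R)
    (h : R ^ 4 + 2 * R ^ 2 * s = 3 * t ^ 4) : 2 * t ^ 3 ≤ R ^ 3 + R * s := by
  refine le_of_mul_le_mul_left ?_ (mul_pos two_pos hR)
  calc 2 * R * (2 * t ^ 3) = 4 * R * t ^ 3 := by ring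
    _ ≤ R ^ 4 + 3 * t ^ 4 := four_mul_mul_pow_three_le R t
    _ = 2 * R * (R ^ 3 + R * s) := by linear_combination -h

theorem rpow_one_div_four_pow {c : ℝ} (hc : 0 ≤ c) (n : ℕ) :
    (c ^ ((1 : ℝ) / 4)) ^ n = c ^ ((n : ℝ) / 4) := by
  rw [← rpow_natCast, ← rpow_mul hc, one_div_mul_eq_div]

theorem stmt_14_general (M₀ a : ℝ) (hM : 0 < M₀)
    (hcrit : a ≤ (2 * M₀ / (3 * π)) ^ ((1 : ℝ) / 2)) :
    (∀ R r₀ : ℝ, 0 < R → 0 ≤ r₀ →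
      (π / 2) * (R ^ 4 + 2 * R ^ 2 * r₀ ^ 2 + 2 * R ^ 2 * a) = M₀ →
      4 * π * (2 * M₀ / (3 * π)) ^ ((3 : ℝ) / 4) ≤
        2 * π * (R ^ 3 + R * r₀ ^ 2 + R * a)) ∧
    (let R₀ : ℝ := (2 * M₀ / (3 * π)) ^ ((1 : ℝ) / 4);
     let r₀ : ℝ := Real.sqrt (R₀ ^ 2 - a);
     0 < R₀ ∧ 0 ≤ r₀ ∧ R₀ ^ 2 = r₀ ^ 2 + a ∧
      (π / 2) * (R₀ ^ 4 + 2 * R₀ ^ 2 * r₀ ^ 2 + 2 * R₀ ^ 2 * a) = M₀ ∧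
      2 * π * (R₀ ^ 3 + R₀ * r₀ ^ 2 + R₀ * a) =
        4 * π * (2 * M₀ / (3 * π)) ^ ((3 : ℝ) / 4)) := by
  set c := 2 * M₀ / (3 * π) with hc
  have hc0 : 0 < c := by positivity
  have hmass (X : ℝ) : (π / 2) * X = M₀ ↔ X = 3 * c := by
    rw [hc]; constructor <;> intro h <;> field_simp at h ⊢ <;> linarith
  set t := c ^ ((1 : ℝ) / 4)
  have ht4 : t ^ 4 = c := by rw [rpow_one_div_four_pow hc0.le]; norm_num
  have ht3 : c ^ ((3 : ℝ) / 4) = t ^ 3 := by rw [rpow_one_div_four_pow hc0.le]; norm_num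
  have ht2 : c ^ ((1 : ℝ) / 2) = t ^ 2 := by rw [rpow_one_div_four_pow hc0.le]; norm_num
  rw [ht3]
  constructor
  · intro R r₀ hR _ hconstr
    have h := two_mul_pow_three_le_of_pow_four_add (s := r₀ ^ 2 + a) (t := t) hR
      (by linear_combination (hmass _).1 hconstr - 3 * ht4)
    linarith [mul_le_mul_of_nonneg_left h two_pi_pos.le]
  · intro R₀ r₀
    have hr₀ : r₀ ^ 2 = t ^ 2 - a := sq_sqrt (by linarith)
    refine ⟨rpow_pos_of_pos hc0 _, sqrt_nonneg _, by linarith, (hmass _).2 ?_, ?_⟩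
    · linear_combination (2 * t ^ 2) * hr₀ + 3 * ht4
    · linear_combination (2 * π * t) * hr₀

open Real in
/-- In the plane with density `ρ(r) = r² + a`, `0 < a ≤ (2M₀/(3π))^(1/2)`: the minimum
of the weighted perimeter `2π(R³ + R r₀² + R a)` over circles of weighted mass `M₀`
(i.e. `(π/2)(R⁴ + 2R²r₀² + 2R²a) = M₀`) equals `4π(2M₀/(3π))^(3/4)`, independent of
`a`, attained at `R = (2M₀/(3π))^(1/4)` and `r₀ = √(R² - a)`, i.e. where
`R² = r₀² + a`. -/
theorem stmt_14 (M₀ a : ℝ) (hM : 0 < M₀) (ha : 0 < a)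
    (hcrit : a ≤ (2 * M₀ / (3 * π)) ^ ((1 : ℝ) / 2)) :
    (∀ R r₀ : ℝ, 0 < R → 0 ≤ r₀ →
      (π / 2) * (R ^ 4 + 2 * R ^ 2 * r₀ ^ 2 + 2 * R ^ 2 * a) = M₀ →
      4 * π * (2 * M₀ / (3 * π)) ^ ((3 : ℝ) / 4) ≤
        2 * π * (R ^ 3 + R * r₀ ^ 2 + R * a)) ∧
    (let R₀ : ℝ := (2 * M₀ / (3 * π)) ^ ((1 : ℝ) / 4);
     let r₀ : ℝ := Real.sqrt (R₀ ^ 2 - a);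
     0 < R₀ ∧ 0 ≤ r₀ ∧ R₀ ^ 2 = r₀ ^ 2 + a ∧
      (π / 2) * (R₀ ^ 4 + 2 * R₀ ^ 2 * r₀ ^ 2 + 2 * R₀ ^ 2 * a) = M₀ ∧
      2 * π * (R₀ ^ 3 + R₀ * r₀ ^ 2 + R₀ * a) =
        4 * π * (2 * M₀ / (3 * π)) ^ ((3 : ℝ) / 4)) :=
  stmt_14_general M₀ a hM hcrit
end
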